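/- Every left duo, l.f.g.u. monoid satisfies the ACCP: if H is a left duo monoid such that, for every ∣_H-non-unit x, the smallest divisor-closed submonoid ⟦x⟧_H of H containing x is f.g.u., then there is no infinite sequence x₁, x₂, … in H with Hxᵢ H strictly contained in Hx_{i+1}H for every i. -/

import Mathlib

open Pointwise

namespace FactPaper

/-- `u` is a `≼`-unit for the preorder-like relation `r` on a monoid. -/
def RUnit {M : Type*} [Monoid M] (r : M → M → Prop) (u : M) : Prop :=
  r u 1 ∧ r 1 u

/-- `u` is a `≼`-non-unit. -/
def RNonUnit {M : Type*} [Monoid M] (r : M → M → Prop) (u : M) : Prop :=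
  ¬ RUnit r u

/-- The strict part `≺` of the relation `r`. -/
def RLt {M : Type*} (r : M → M → Prop) (x y : M) : Prop :=
  r x y ∧ ¬ r y x

/-- `a` is a `≼`-irreducible. -/
def RIrred {M : Type*} [Monoid M] (r : M → M → Prop) (a : M) : Prop :=
  RNonUnit r a ∧
    ∀ y z : M, RNonUnit r y → RNonUnit r z → RLt r y a → RLt r z a → a ≠ y * z

/-- `a` is a `≼`-atom. -/
def RAtom {M : Type*} [Monoid M] (r : M → M → Prop) (a : M) : Prop :=
  RNonUnit r a ∧ ∀ y z : M, RNonUnit r y → RNonUnit r z → a ≠ y * z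

/-- `a` is a `≼`-quark. -/
def RQuark {M : Type*} [Monoid M] (r : M → M → Prop) (a : M) : Prop :=
  RNonUnit r a ∧ ¬ ∃ b : M, RNonUnit r b ∧ RLt r b a

/-- The divisibility preorder: `Dvd2 x y` iff `y ∈ M x M`. -/
def Dvd2 {M : Type*} [Monoid M] (x y : M) : Prop :=
  ∃ u v : M, y = u * x * v

/-- The restriction of a relation on `M` to a submonoid `K`. -/
def SubRel {M : Type*} [Monoid M] (r : M → M → Prop) (K : Submonoid M) (a b : K) : Prop :=
  r (a : M) (b : M)

/-- The preorder `⊑` on words induced by `r`: an injection of indices matching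
`r`-equivalent letters. -/
def WordLe {M : Type*} (r : M → M → Prop) (l m : List M) : Prop :=
  ∃ σ : Fin l.length ↪ Fin m.length,
    ∀ i : Fin l.length, r (l.get i) (m.get (σ i)) ∧ r (m.get (σ i)) (l.get i)

/-- `⊑`-equivalence of words. -/
def WordEquiv {M : Type*} (r : M → M → Prop) (l m : List M) : Prop :=
  WordLe r l m ∧ WordLe r m l

/-- `l` is a `≼`-factorization of `x`: a word of `≼`-irreducibles with product `x`. -/
def IsFac {M : Type*} [Monoid M] (r : M → M → Prop) (x : M) (l : List M) : Prop :=
  (∀ a ∈ l, RIrred r a) ∧ l.prod = x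

/-- `l` is a minimal `≼`-factorization of `x`: a `⊑`-minimal `≼`-factorization. -/
def IsMinFac {M : Type*} [Monoid M] (r : M → M → Prop) (x : M) (l : List M) : Prop :=
  IsFac r x l ∧ ∀ m : List M, IsFac r x m → WordLe r m l → WordLe r l m

/-- `l` is an atomic `≼`-factorization of `x`. -/
def IsAtomicFac {M : Type*} [Monoid M] (r : M → M → Prop) (x : M) (l : List M) : Prop :=
  (∀ a ∈ l, RAtom r a) ∧ l.prod = x

/-- `l` is a minimal atomic `≼`-factorization of `x`. -/
def IsMinAtomicFac {M : Type*} [Monoid M] (r : M → M → Prop) (x : M) (l : List M) : Prop :=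
  IsMinFac r x l ∧ ∀ a ∈ l, RAtom r a

/-- Every `≼`-non-unit is a non-empty product of `≼`-irreducibles. -/
def Factorable {M : Type*} [Monoid M] (r : M → M → Prop) : Prop :=
  ∀ x : M, RNonUnit r x →
    ∃ l : List M, l ≠ [] ∧ (∀ a ∈ l, RIrred r a) ∧ l.prod = x

/-- Every `≼`-non-unit is a non-empty product of `≼`-atoms. -/
def Atomic {M : Type*} [Monoid M] (r : M → M → Prop) : Prop :=
  ∀ x : M, RNonUnit r x →
    ∃ l : List M, l ≠ [] ∧ (∀ a ∈ l, RAtom r a) ∧ l.prod = x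

/-- The premonoid `(M, r)` is finitely generated up to units. -/
def IsFGU {M : Type*} [Monoid M] (r : M → M → Prop) : Prop :=
  ∃ A : Set M, A.Finite ∧
    Submonoid.closure
      {w : M | ∃ u a v : M, RUnit r u ∧ a ∈ A ∧ RUnit r v ∧ w = u * a * v} = ⊤

/-- The submonoid generated by the `∣_M`-divisors of `x` (ground monoid of the germ of a
premonoid at `x`). -/
def GermSub {M : Type*} [Monoid M] (x : M) : Submonoid M :=
  Submonoid.closure {y : M | Dvd2 y x}

/-- Membership in the smallest divisor-closed submonoid containing `x`. -/
inductive InDC {M : Type*} [Monoid M] (x : M) : M → Prop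
  | base : InDC x x
  | one : InDC x 1
  | mul {a b : M} : InDC x a → InDC x b → InDC x (a * b)
  | dvd {a b : M} : InDC x b → Dvd2 a b → InDC x a

/-- The smallest divisor-closed submonoid of `M` containing `x`. -/
def DCSub {M : Type*} [Monoid M] (x : M) : Submonoid M where
  carrier := {y : M | InDC x y}
  mul_mem' := fun ha hb => InDC.mul ha hb
  one_mem' := InDC.one

/-- `(M, r)` is a weakly positive monoid. -/
def WeaklyPositive {M : Type*} [Monoid M] (r : M → M → Prop) : Prop :=
  (∀ x u v : M, RUnit r u → RUnit r v → r (u * x * v) x) ∧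
    (∀ x a b : M, r x (a * x * b))

/-- `(M, r)` is locally of finite type (loft). -/
def IsLoft {M : Type*} [Monoid M] (r : M → M → Prop) : Prop :=
  ∀ x : M, RNonUnit r x →
    ∃ A : Set M, A.Finite ∧ A ⊆ {a : M | RIrred r a} ∧
      ∀ l : List M, IsFac r x l →
        ∃ m : List M, (∀ a ∈ m, a ∈ A) ∧ WordEquiv r l m

/-- `(M, r)` is BF-factorable. -/
def IsBFFactorable {M : Type*} [Monoid M] (r : M → M → Prop) : Prop :=
  ∀ x : M, RNonUnit r x →
    {n : ℕ | ∃ l : List M, IsFac r x l ∧ l.length = n}.Finite ∧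
      {n : ℕ | ∃ l : List M, IsFac r x l ∧ l.length = n}.Nonempty

/-- `(M, r)` is BmF-factorable. -/
def IsBmFFactorable {M : Type*} [Monoid M] (r : M → M → Prop) : Prop :=
  ∀ x : M, RNonUnit r x →
    {n : ℕ | ∃ l : List M, IsMinFac r x l ∧ l.length = n}.Finite ∧
      {n : ℕ | ∃ l : List M, IsMinFac r x l ∧ l.length = n}.Nonempty

/-- `(M, r)` is FF-factorable: modulo `⊑`-equivalence, every `≼`-non-unit has finitely
many (and at least one) `≼`-factorizations. -/
def IsFFFactorable {M : Type*} [Monoid M] (r : M → M → Prop) : Prop :=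
  ∀ x : M, RNonUnit r x →
    (∃ l : List M, IsFac r x l) ∧
      ∃ F : Set (List M), F.Finite ∧
        ∀ l : List M, IsFac r x l → ∃ m ∈ F, IsFac r x m ∧ WordEquiv r l m

/-- `(M, r)` is FmF-factorable. -/
def IsFmFFactorable {M : Type*} [Monoid M] (r : M → M → Prop) : Prop :=
  ∀ x : M, RNonUnit r x →
    (∃ l : List M, IsMinFac r x l) ∧
      ∃ F : Set (List M), F.Finite ∧
        ∀ l : List M, IsMinFac r x l → ∃ m ∈ F, IsMinFac r x m ∧ WordEquiv r l m

/-- `(M, r)` is FF-atomic. -/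
def IsFFAtomic {M : Type*} [Monoid M] (r : M → M → Prop) : Prop :=
  ∀ x : M, RNonUnit r x →
    (∃ l : List M, IsAtomicFac r x l) ∧
      ∃ F : Set (List M), F.Finite ∧
        ∀ l : List M, IsAtomicFac r x l → ∃ m ∈ F, IsAtomicFac r x m ∧ WordEquiv r l m

/-- `(M, r)` is FmF-atomic. -/
def IsFmFAtomic {M : Type*} [Monoid M] (r : M → M → Prop) : Prop :=
  ∀ x : M, RNonUnit r x →
    (∃ l : List M, IsMinAtomicFac r x l) ∧
      ∃ F : Set (List M), F.Finite ∧
        ∀ l : List M, IsMinAtomicFac r x l → ∃ m ∈ F, IsMinAtomicFac r x m ∧ WordEquiv r l m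

/-!
In a left duo monoid `∣_H` is compatible with multiplication (`a ∣ b` and `c ∣ d` give
`ac ∣ bd`, since `aHc ⊆ Hac`). Hence every element of an f.g.u. divisor-closed submonoid
`K` is `∣_H`-associated to the product of a word over the finite set `A`, because the
`∣_H`-units around each generator can be dropped, and a subword's product divides the word's.
A strictly ascending chain `H x₀ H ⊊ H x₁ H ⊊ ⋯` lies in `⟦x₀⟧_H`; by Higman's lemma the word
of some `xᵢ` is a subword of that of some `xⱼ` with `i < j`, so `xᵢ ∣_H xⱼ`, contradicting
strictness.
-/

section

variable {H : Type*} [Monoid H]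

theorem dvd2_refl (a : H) : Dvd2 a a :=
  ⟨1, 1, by simp⟩

theorem one_dvd2 (a : H) : Dvd2 1 a :=
  ⟨a, 1, by simp⟩

theorem Dvd2.trans {a b c : H} (hab : Dvd2 a b) (hbc : Dvd2 b c) : Dvd2 a c := by
  obtain ⟨s, t, rfl⟩ := hab
  obtain ⟨s', t', rfl⟩ := hbc
  exact ⟨s' * s, t * t', by simp only [mul_assoc]⟩

theorem mem_univ_mul_singleton_mul_univ {a b : H} :
    b ∈ (Set.univ : Set H) * {a} * Set.univ ↔ Dvd2 a b := by
  constructor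
  · rintro ⟨_, ⟨u, -, _, rfl, rfl⟩, v, -, rfl⟩
    exact ⟨u, v, rfl⟩
  · rintro ⟨u, v, rfl⟩
    exact ⟨u * a, ⟨u, trivial, a, rfl, rfl⟩, v, trivial, rfl⟩

theorem univ_mul_singleton_mul_univ_subset_iff {a b : H} :
    (Set.univ : Set H) * {a} * Set.univ ⊆ Set.univ * {b} * Set.univ ↔ Dvd2 b a := by
  refine ⟨fun h => mem_univ_mul_singleton_mul_univ.1 (h ?_), fun hba c hc => ?_⟩
  · exact mem_univ_mul_singleton_mul_univ.2 (dvd2_refl a)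
  · exact mem_univ_mul_singleton_mul_univ.2 (hba.trans (mem_univ_mul_singleton_mul_univ.1 hc))

theorem inDC_of_dvd2_succ {x : ℕ → H} (hx : ∀ i, Dvd2 (x (i + 1)) (x i)) (i : ℕ) :
    InDC (x 0) (x i) := by
  induction i with
  | zero => exact InDC.base
  | succ n ih => exact InDC.dvd ih (hx n)

theorem exists_lt_sublist_of_finite {α : Type*} {S : Set α} (hS : S.Finite)
    (w : ℕ → List α) (hw : ∀ n, ∀ a ∈ w n, a ∈ S) : ∃ i j, i < j ∧ (w i).Sublist (w j) := by
  obtain ⟨i, j, hij, hsub⟩ := hS.partiallyWellOrderedOn.partiallyWellOrderedOn_sublistForall₂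
    (· = ·) (fun n => ⟨w n, hw n⟩)
  obtain ⟨l, heq, hl⟩ := List.sublistForall₂_iff.1 hsub
  rw [List.forall₂_eq_eq_eq] at heq
  exact ⟨i, j, hij, by rwa [← heq] at hl⟩

variable (H) in
def IsLeftDuo : Prop :=
  ∀ a b : H, ∃ c : H, a * b = c * a

namespace IsLeftDuo

theorem dvd2_mul (hH : IsLeftDuo H) {a b c d : H} (hab : Dvd2 a b) (hcd : Dvd2 c d) :
    Dvd2 (a * c) (b * d) := by
  obtain ⟨s, t, rfl⟩ := hab
  obtain ⟨s', t', rfl⟩ := hcd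
  obtain ⟨e, he⟩ := hH a (t * s')
  refine ⟨s * e, t', ?_⟩
  calc s * a * t * (s' * c * t') = s * (a * (t * s')) * c * t' := by simp only [mul_assoc]
    _ = s * e * (a * c) * t' := by rw [he]; simp only [mul_assoc]

theorem dvd2_prod_of_sublist (hH : IsLeftDuo H) {l₁ l₂ : List H} (h : l₁.Sublist l₂) :
    Dvd2 l₁.prod l₂.prod := by
  induction h with
  | slnil => exact dvd2_refl 1
  | cons a _ ih => simpa using hH.dvd2_mul (one_dvd2 a) ih
  | cons_cons a _ ih => simpa using hH.dvd2_mul (dvd2_refl a) ih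

theorem exists_word_of_closure_eq_top (hH : IsLeftDuo H) {K : Submonoid H} {A : Set K}
    (hA : Submonoid.closure {w : K | ∃ u a v : K, RUnit (SubRel Dvd2 K) u ∧ a ∈ A ∧
      RUnit (SubRel Dvd2 K) v ∧ w = u * a * v} = ⊤) (y : K) :
    ∃ w : List H, (∀ a ∈ w, a ∈ Subtype.val '' A) ∧
      Dvd2 (y : H) w.prod ∧ Dvd2 w.prod (y : H) := by
  have hy : y ∈ Submonoid.closure _ := hA ▸ Submonoid.mem_top y
  induction hy using Submonoid.closure_induction with
  | one => exact ⟨[], by simp, dvd2_refl 1, dvd2_refl 1⟩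
  | mem g hg =>
    obtain ⟨u, a, v, hu, ha, hv, rfl⟩ := hg
    refine ⟨[(a : H)], by simpa using ha, ?_, ?_⟩
    · simpa using hH.dvd2_mul (hH.dvd2_mul hu.1 (dvd2_refl (a : H))) hv.1
    · simpa using hH.dvd2_mul (hH.dvd2_mul hu.2 (dvd2_refl (a : H))) hv.2
  | mul y z _ _ ihy ihz =>
    obtain ⟨w, hwA, hyw, hwy⟩ := ihy
    obtain ⟨w', hwA', hzw, hwz⟩ := ihz
    refine ⟨w ++ w', fun a ha => ?_, ?_, ?_⟩
    · rcases List.mem_append.1 ha with ha | ha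
      exacts [hwA a ha, hwA' a ha]
    · simpa using hH.dvd2_mul hyw hzw
    · simpa using hH.dvd2_mul hwy hwz

end IsLeftDuo

end

/-- Theorem 5.6. Every left duo, l.f.g.u. monoid satisfies the ACCP:
there is no sequence `x₁, x₂, …` with `H xᵢ H` strictly contained in `H x_{i+1} H` for
every `i`. -/
theorem stmt18 {H : Type*} [Monoid H]
    (hduo : ∀ a b : H, ∃ c : H, a * b = c * a)
    (hlfgu : ∀ x : H, RNonUnit (Dvd2 : H → H → Prop) x →
      IsFGU (SubRel (Dvd2 : H → H → Prop) (DCSub x))) :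
    ¬ ∃ x : ℕ → H, ∀ i : ℕ,
      ((Set.univ : Set H) * {x i} * (Set.univ : Set H)) ⊂
        ((Set.univ : Set H) * {x (i + 1)} * (Set.univ : Set H)) := by
  rintro ⟨x, hx⟩
  have hH : IsLeftDuo H := hduo
  have hchain : StrictMono fun i => (Set.univ : Set H) * {x i} * Set.univ :=
    strictMono_nat_of_lt_succ hx
  have hnot_dvd2 : ∀ i j, i < j → ¬ Dvd2 (x i) (x j) := fun i j hij hd =>
    (hchain hij).not_subset (univ_mul_singleton_mul_univ_subset_iff.2 hd)
  have hnonunit : RNonUnit Dvd2 (x 0) := fun hu =>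
    hnot_dvd2 0 1 one_pos (hu.1.trans (one_dvd2 _))
  obtain ⟨A, hAfin, hA⟩ := hlfgu (x 0) hnonunit
  have hmem : ∀ i, x i ∈ DCSub (x 0) := inDC_of_dvd2_succ fun i =>
    univ_mul_singleton_mul_univ_subset_iff.1 (hx i).subset
  choose w hwA hxw hwx using fun i => hH.exists_word_of_closure_eq_top hA ⟨x i, hmem i⟩
  obtain ⟨i, j, hij, hsub⟩ := exists_lt_sublist_of_finite (hAfin.image _) w hwA
  exact hnot_dvd2 i j hij ((hxw i).trans ((hH.dvd2_prod_of_sublist hsub).trans (hwx j)))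

end FactPaper
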